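/- Hardy's inequality on R^3: for every smooth compactly supported function u : R^3 → R, ∫_{R^3} u(x)^2 / |x|^2 dx ≤ 4 ∫_{R^3} |∇u(x)|^2 dx. -/

import Mathlib

open MeasureTheory

section HardyAux

open Set Filter Topology
open scoped ENNReal

lemma lemA_pi (f : (Fin 3 → ℝ) → ℝ) (hf : ContDiff ℝ 1 f) (hs : HasCompactSupport f)
    (v : Fin 3 → ℝ) : ∫ x, fderiv ℝ f x v = 0 := by
  obtain ⟨R, hR0, hRsub⟩ : ∃ R > 0, tsupport f ⊆ Metric.ball 0 R := by
    obtain ⟨R, hR0, hRsub⟩ := hs.isBounded.subset_ball_lt 0 0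
    exact ⟨R, hR0, hRsub⟩
  set a : Fin 3 → ℝ := fun _ => -R with ha
  set b : Fin 3 → ℝ := fun _ => R with hb
  have hle : a ≤ b := fun i => by simp [ha, hb]; linarith
  have hball : Metric.ball (0 : Fin 3 → ℝ) R ⊆ Icc a b := by
    intro y hy
    rw [mem_ball_zero_iff] at hy
    constructor <;> intro i <;>
      have := (norm_le_pi_norm y i).trans hy.le <;>
      rw [Real.norm_eq_abs, abs_le] at this
    · exact this.1
    · exact this.2
  have hdiff : Differentiable ℝ f := hf.differentiable one_ne_zero
  have key := integral_divergence_of_hasFDerivAt_off_countable' a b hle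
      (fun i y => v i * f y) (fun i y => v i • fderiv ℝ f y) ∅ countable_empty
      (fun i => (continuous_const.mul hf.continuous).continuousOn)
      (fun x _ i => ((hdiff x).hasFDerivAt).const_smul (v i))
      (by
        apply ContinuousOn.integrableOn_compact isCompact_Icc
        apply Continuous.continuousOn
        apply continuous_finset_sum
        intro i _
        simp only [ContinuousLinearMap.smul_apply]
        exact ((hf.continuous_fderiv one_ne_zero).clm_apply continuous_const).const_smul (v i))
  -- faces vanish
  have hface : ∀ (i : Fin 3) (c : ℝ), |c| = R → ∀ x : Fin 2 → ℝ, f (i.insertNth c x) = 0 := by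
    intro i c hc x
    apply image_eq_zero_of_notMem_tsupport
    intro hmem
    have h1 := hRsub hmem
    rw [mem_ball_zero_iff] at h1
    have h2 := norm_le_pi_norm (i.insertNth c x : Fin 3 → ℝ) i
    rw [Fin.insertNth_apply_same, Real.norm_eq_abs, hc] at h2
    exact absurd (h2.trans_lt h1) (lt_irrefl R)
  rw [show ∑ i : Fin (2+1),
      ((∫ x in Icc (a ∘ i.succAbove) (b ∘ i.succAbove),
          (fun i y => v i * f y) i (i.insertNth (b i) x)) -
        ∫ x in Icc (a ∘ i.succAbove) (b ∘ i.succAbove),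
          (fun i y => v i * f y) i (i.insertNth (a i) x)) = 0 from Finset.sum_eq_zero (by
    intro i _
    simp only
    rw [show (b i) = R from rfl, show (a i) = -R from rfl]
    have e1 : ∀ x : Fin 2 → ℝ, v i * f (i.insertNth R x) = 0 := by
      intro x; rw [hface i R (abs_of_pos hR0) x, mul_zero]
    have e2 : ∀ x : Fin 2 → ℝ, v i * f (i.insertNth (-R) x) = 0 := by
      intro x; rw [hface i (-R) (by rw [abs_neg, abs_of_pos hR0]) x, mul_zero]
    simp [e1, e2])] at key
  · have hint : ∀ x : Fin 3 → ℝ,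
        (∑ i : Fin (2+1), ((fun i y => v i • fderiv ℝ f y) i x) (Pi.single i 1))
          = fderiv ℝ f x v := by
      intro x
      simp only [ContinuousLinearMap.smul_apply]
      have h3 : ∀ i : Fin 3, v i • fderiv ℝ f x (Pi.single i 1)
          = fderiv ℝ f x (Pi.single i (v i)) := by
        intro i
        have : (Pi.single i (v i) : Fin 3 → ℝ) = v i • (Pi.single i (1:ℝ) : Fin 3 → ℝ) := by
          funext j
          by_cases h : j = i <;> simp [h, Pi.single_apply]
        rw [this, ContinuousLinearMap.map_smul]
      rw [Finset.sum_congr rfl fun i _ => h3 i, ← map_sum]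
      rw [Finset.univ_sum_single]
    simp only [hint] at key
    rw [← key]
    symm
    apply setIntegral_eq_integral_of_forall_compl_eq_zero
    intro x hx
    have : x ∉ tsupport f := fun h => hx (hball (hRsub h))
    have h0 : fderiv ℝ f x = 0 := by
      by_contra h
      exact this (support_fderiv_subset ℝ (Function.mem_support.2 h))
    simp [h0]

noncomputable abbrev E3 : Type := EuclideanSpace ℝ (Fin 3)

lemma lemA (f : E3 → ℝ) (hf : ContDiff ℝ 1 f) (hs : HasCompactSupport f) (v : E3) :
    ∫ x, fderiv ℝ f x v = 0 := by
  set L : E3 ≃L[ℝ] (Fin 3 → ℝ) := PiLp.continuousLinearEquiv 2 ℝ (fun _ : Fin 3 => ℝ) with hL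
  set g : (Fin 3 → ℝ) → ℝ := f ∘ L.symm with hg
  have hgc : ContDiff ℝ 1 g := hf.comp L.symm.contDiff
  have hgs : HasCompactSupport g := hs.comp_homeomorph L.symm.toHomeomorph
  have hder : ∀ y : Fin 3 → ℝ, fderiv ℝ g y (L v) = fderiv ℝ f (L.symm y) v := by
    intro y
    have h1 : HasFDerivAt g ((fderiv ℝ f (L.symm y)).comp
        (L.symm : (Fin 3 → ℝ) →L[ℝ] E3)) y :=
      ((hf.differentiable one_ne_zero) (L.symm y)).hasFDerivAt.comp y L.symm.hasFDerivAt
    rw [h1.fderiv]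
    simp
  have hmp : MeasurePreserving (MeasurableEquiv.toLp 2 (Fin 3 → ℝ)) :=
    (EuclideanSpace.volume_preserving_symm_measurableEquiv_toLp (Fin 3)).symm
  have := lemA_pi g hgc hgs (L v)
  rw [← this]
  rw [← hmp.integral_comp (MeasurableEquiv.toLp 2 (Fin 3 → ℝ)).measurableEmbedding
    (fun x => fderiv ℝ f x v)]
  congr 1
  funext y
  rw [hder y]
  congr 1

lemma lemIBP (φ : E3 → ℝ) (hφ : ContDiff ℝ 1 φ) (hs : HasCompactSupport φ) :
    ∫ x, fderiv ℝ φ x x = -3 * ∫ x, φ x := by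
  have hφd : Differentiable ℝ φ := hφ.differentiable one_ne_zero
  have hφcont := hφ.continuous
  have hfdcont : Continuous (fderiv ℝ φ) := hφ.continuous_fderiv one_ne_zero
  -- per-coordinate identity
  have hcoord : ∀ i : Fin 3,
      ∫ x : E3, (x i * fderiv ℝ φ x (EuclideanSpace.single i 1) + φ x) = 0 := by
    intro i
    have hproj : ContDiff ℝ 1 (fun x : E3 => x i) := (EuclideanSpace.proj (𝕜 := ℝ) i).contDiff
    have hgc : ContDiff ℝ 1 (fun x : E3 => φ x * x i) := hφ.mul hproj
    have hgs : HasCompactSupport (fun x : E3 => φ x * x i) := hs.mul_right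
    have hder : ∀ x : E3, fderiv ℝ (fun x : E3 => φ x * x i) x (EuclideanSpace.single i 1)
        = x i * fderiv ℝ φ x (EuclideanSpace.single i 1) + φ x := by
      intro x
      have h1 : HasFDerivAt (fun x : E3 => φ x * x i)
          (φ x • (EuclideanSpace.proj (𝕜 := ℝ) i) + x i • fderiv ℝ φ x) x :=
        (hφd x).hasFDerivAt.mul (EuclideanSpace.proj (𝕜 := ℝ) i).hasFDerivAt
      rw [h1.fderiv]
      simp [EuclideanSpace.proj, mul_comm]
      ring
    have := lemA (fun x : E3 => φ x * x i) hgc hgs (EuclideanSpace.single i 1)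
    rw [← this]
    congr 1
    funext x
    rw [hder x]
  -- integrability of the pieces
  have hint1 : ∀ i : Fin 3, Integrable (fun x : E3 =>
      x i * fderiv ℝ φ x (EuclideanSpace.single i 1)) := by
    intro i
    apply Continuous.integrable_of_hasCompactSupport
    · exact ((EuclideanSpace.proj (𝕜 := ℝ) i).continuous).mul
        (hfdcont.clm_apply continuous_const)
    · apply HasCompactSupport.mul_left
      apply HasCompactSupport.intro hs
      intro x hx
      have : fderiv ℝ φ x = 0 := by
        by_contra h
        exact hx (support_fderiv_subset ℝ (Function.mem_support.2 h))
      simp [this]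
  have hintφ : Integrable φ := hφcont.integrable_of_hasCompactSupport hs
  -- sum over coordinates
  have hsum := Finset.sum_congr rfl (fun i (_ : i ∈ Finset.univ) => hcoord i)
  rw [Finset.sum_const] at hsum
  have hsplit : ∀ i : Fin 3, ∫ x : E3, (x i * fderiv ℝ φ x (EuclideanSpace.single i 1) + φ x)
      = (∫ x : E3, x i * fderiv ℝ φ x (EuclideanSpace.single i 1)) + ∫ x, φ x := by
    intro i; exact integral_add (hint1 i) hintφ
  simp only [hsplit] at hsum
  rw [Finset.sum_add_distrib, ← integral_finset_sum _ (fun i _ => hint1 i)] at hsum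
  have hdecomp : ∀ x : E3,
      (∑ i : Fin 3, x i * fderiv ℝ φ x (EuclideanSpace.single i 1)) = fderiv ℝ φ x x := by
    intro x
    have h3 : ∀ i : Fin 3, x i * fderiv ℝ φ x (EuclideanSpace.single i 1)
        = fderiv ℝ φ x (x i • EuclideanSpace.single i 1) := by
      intro i; rw [ContinuousLinearMap.map_smul]; rfl
    rw [Finset.sum_congr rfl fun i _ => h3 i, ← map_sum]
    congr 1
    ext j
    rw [Fin.sum_univ_three]
    fin_cases j <;>
      simp [EuclideanSpace.single_apply, PiLp.add_apply, PiLp.smul_apply]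
  rw [show (fun x : E3 => ∑ i : Fin 3, x i * fderiv ℝ φ x (EuclideanSpace.single i 1))
      = fun x : E3 => fderiv ℝ φ x x from funext hdecomp] at hsum
  simp only [Finset.sum_const, Finset.card_univ, Fintype.card_fin, nsmul_eq_mul] at hsum
  push_cast at hsum
  linarith

lemma step_eps (u : E3 → ℝ) (hu : ContDiff ℝ (⊤ : ℕ∞) u) (hsupp : HasCompactSupport u)
    {ε : ℝ} (hε : 0 < ε) :
    ∫ x, u x ^ 2 / (‖x‖ ^ 2 + ε) ≤ 4 * ∫ x, ‖fderiv ℝ u x‖ ^ 2 := by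
  have hu1 : ContDiff ℝ 1 u := hu.of_le (by simp)
  have hud : Differentiable ℝ u := hu1.differentiable one_ne_zero
  have hucont := hu1.continuous
  have hfdcont : Continuous (fderiv ℝ u) := hu.continuous_fderiv (by simp)
  set N : E3 → ℝ := fun x => ‖x‖ ^ 2 + ε with hNdef
  have hN0 : ∀ x, 0 < N x := fun x => by positivity
  have hNcont : Continuous N := (continuous_norm.pow 2).add continuous_const
  set φ : E3 → ℝ := fun x => u x ^ 2 / N x with hφdef
  -- derivative of N
  have hNder : ∀ x : E3, HasFDerivAt N (2 • (innerSL ℝ x)) x := fun x =>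
    ((hasStrictFDerivAt_norm_sq x).hasFDerivAt).add_const ε
  -- derivative of φ at x, value in direction x
  have hφx : ∀ x : E3, fderiv ℝ φ x x
      = 2 * u x * fderiv ℝ u x x / N x - 2 * u x ^ 2 * ‖x‖ ^ 2 / N x ^ 2 := by
    intro x
    have hInv : HasFDerivAt (fun y => (N y)⁻¹)
        ((-((N x) ^ 2)⁻¹) • (2 • (innerSL ℝ x))) x :=
      (hasDerivAt_inv (hN0 x).ne').comp_hasFDerivAt x (hNder x)
    have hu2 : HasFDerivAt (fun y => u y * u y)
        (u x • fderiv ℝ u x + u x • fderiv ℝ u x) x :=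
      ((hud x).hasFDerivAt).mul ((hud x).hasFDerivAt)
    have hmul : HasFDerivAt φ
        ((u x * u x) • ((-((N x) ^ 2)⁻¹) • (2 • (innerSL ℝ x)))
          + (N x)⁻¹ • (u x • fderiv ℝ u x + u x • fderiv ℝ u x)) x := by
      have h := hu2.mul hInv
      have heq : φ = fun y => (u y * u y) * (N y)⁻¹ := by
        funext y
        show u y ^ 2 / N y = u y * u y * (N y)⁻¹
        rw [sq, div_eq_mul_inv]
      rw [heq]
      exact h
    rw [hmul.fderiv]
    simp only [ContinuousLinearMap.add_apply, ContinuousLinearMap.smul_apply,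
      ContinuousLinearMap.coe_smul', Pi.smul_apply, innerSL_apply_apply, smul_eq_mul,
      real_inner_self_eq_norm_sq]
    have hNx := (hN0 x).ne'
    field_simp
    ring
  -- smoothness and support of φ
  have hφc : ContDiff ℝ 1 φ :=
    (hu1.pow 2).div ((contDiff_norm_sq ℝ).add contDiff_const) (fun x => (hN0 x).ne')
  have hφs : HasCompactSupport φ := by
    apply HasCompactSupport.intro hsupp
    intro x hx
    show u x ^ 2 / N x = 0
    rw [image_eq_zero_of_notMem_tsupport hx]
    simp
  -- the functions P, Q, G
  set G : E3 → ℝ := fun x => ‖fderiv ℝ u x‖ ^ 2 with hGdef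
  set P : E3 → ℝ := fun x => u x ^ 2 * (‖x‖ ^ 2 + 3 * ε) / N x ^ 2 with hPdef
  set Q : E3 → ℝ := fun x => 2 * u x * fderiv ℝ u x x / N x with hQdef
  have hfd0 : ∀ x, x ∉ tsupport u → fderiv ℝ u x = 0 := by
    intro x hx
    by_contra h
    exact hx (support_fderiv_subset ℝ (Function.mem_support.2 h))
  -- integrability
  have intφ : Integrable φ := hφc.continuous.integrable_of_hasCompactSupport hφs
  have intG : Integrable G := by
    apply Continuous.integrable_of_hasCompactSupport ((hfdcont.norm).pow 2)
    apply HasCompactSupport.intro hsupp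
    intro x hx
    show ‖fderiv ℝ u x‖ ^ 2 = 0
    rw [hfd0 x hx]
    simp
  have intP : Integrable P := by
    apply Continuous.integrable_of_hasCompactSupport
    · exact (((hucont.pow 2).mul ((continuous_norm.pow 2).add continuous_const)).div
        (hNcont.pow 2) (fun x => pow_ne_zero 2 (hN0 x).ne'))
    · apply HasCompactSupport.intro hsupp
      intro x hx
      show u x ^ 2 * (‖x‖ ^ 2 + 3 * ε) / N x ^ 2 = 0
      rw [image_eq_zero_of_notMem_tsupport hx]
      simp
  have intQ : Integrable Q := by
    apply Continuous.integrable_of_hasCompactSupport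
    · exact ((continuous_const.mul hucont).mul (hfdcont.clm_apply continuous_id)).div
        hNcont (fun x => (hN0 x).ne')
    · apply HasCompactSupport.intro hsupp
      intro x hx
      show 2 * u x * fderiv ℝ u x x / N x = 0
      rw [image_eq_zero_of_notMem_tsupport hx]
      simp
  -- IBP identity
  have hIBP := lemIBP φ hφc hφs
  have hpt : ∀ x : E3, fderiv ℝ φ x x = Q x + P x - 3 * φ x := by
    intro x
    rw [hφx x]
    show _ = 2 * u x * fderiv ℝ u x x / N x
      + u x ^ 2 * (‖x‖ ^ 2 + 3 * ε) / N x ^ 2 - 3 * (u x ^ 2 / N x)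
    have hNx : N x = ‖x‖ ^ 2 + ε := rfl
    have hNne := (hN0 x).ne'
    field_simp
    ring
  have hPQ : ∫ x, P x = - ∫ x, Q x := by
    have e1 : ∫ x, fderiv ℝ φ x x = ∫ x, (Q x + P x - 3 * φ x) := by
      congr 1; funext x; exact hpt x
    rw [e1] at hIBP
    have intQP : Integrable (fun x => Q x + P x) := intQ.add intP
    have int3φ : Integrable (fun x => 3 * φ x) := intφ.const_mul 3
    rw [integral_sub intQP int3φ, integral_add intQ intP,
      integral_const_mul] at hIBP
    linarith
  -- pointwise bounds
  have hφleP : ∀ x, φ x ≤ P x := by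
    intro x
    show u x ^ 2 / N x ≤ u x ^ 2 * (‖x‖ ^ 2 + 3 * ε) / N x ^ 2
    rw [div_le_div_iff₀ (hN0 x) (by positivity)]
    have hNx : N x = ‖x‖ ^ 2 + ε := rfl
    have hle : N x ≤ ‖x‖ ^ 2 + 3 * ε := by rw [hNx]; linarith
    nlinarith [mul_le_mul_of_nonneg_left hle
      (by positivity : (0:ℝ) ≤ u x ^ 2 * N x), sq_nonneg (u x), hN0 x]
  have hQle : ∀ x, - Q x ≤ 1/2 * φ x + 2 * G x := by
    intro x
    show -(2 * u x * fderiv ℝ u x x / N x)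
      ≤ 1/2 * (u x ^ 2 / N x) + 2 * ‖fderiv ℝ u x‖ ^ 2
    set a := u x
    set d := fderiv ℝ u x x
    set b := ‖fderiv ℝ u x‖
    set r := ‖x‖
    have hd : |d| ≤ b * r := by
      have := (fderiv ℝ u x).le_opNorm x
      rwa [Real.norm_eq_abs] at this
    have hb : 0 ≤ b := norm_nonneg _
    have hr : 0 ≤ r := norm_nonneg _
    have hNx : N x = r ^ 2 + ε := rfl
    have hn := hN0 x
    have hX : -(2 * a * d) ≤ a ^ 2 / 2 + 2 * b ^ 2 * N x := by
      have h1 : -(a * d) ≤ |a| * |d| := by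
        rw [← abs_mul]; exact neg_le_abs _
      have h2 : |a| * |d| ≤ |a| * (b * r) :=
        mul_le_mul_of_nonneg_left hd (abs_nonneg a)
      nlinarith [sq_nonneg (|a| - 2 * b * r), sq_abs a, sq_nonneg b, hε]
    have := (div_le_div_iff_of_pos_right hn).mpr hX
    calc -(2 * a * d / N x) = -(2 * a * d) / N x := by ring
      _ ≤ (a ^ 2 / 2 + 2 * b ^ 2 * N x) / N x := this
      _ = 1/2 * (a ^ 2 / N x) + 2 * b ^ 2 := by field_simp
  -- conclude
  have hA1 : ∫ x, φ x ≤ ∫ x, P x := integral_mono intφ intP hφleP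
  have hA2 : ∫ x, (- Q x) ≤ ∫ x, (1/2 * φ x + 2 * G x) :=
    integral_mono intQ.neg ((intφ.const_mul _).add (intG.const_mul _)) hQle
  rw [integral_neg,
    integral_add (intφ.const_mul _) (intG.const_mul _)] at hA2
  rw [integral_const_mul, integral_const_mul] at hA2
  have hgoal : ∫ x, φ x ≤ 4 * ∫ x, G x := by linarith
  exact hgoal

end HardyAux

section
open Set Filter Topology
open scoped ENNReal

/-- **Hardy's inequality on `ℝ³`.** For every smooth compactly supported
`u : ℝ³ → ℝ`, `∫ u² / |x|² ≤ 4 ∫ |∇u|²`. -/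
theorem stmt1_hardy_inequality
    (u : EuclideanSpace ℝ (Fin 3) → ℝ) (hu : ContDiff ℝ (⊤ : ℕ∞) u)
    (hsupp : HasCompactSupport u) :
    ∫ x, u x ^ 2 / ‖x‖ ^ 2 ≤ 4 * ∫ x, ‖fderiv ℝ u x‖ ^ 2 := by
  have hucont := hu.continuous
  have hfdcont : Continuous (fderiv ℝ u) := hu.continuous_fderiv (by simp)
  set B : ℝ := ∫ x : E3, ‖fderiv ℝ u x‖ ^ 2 with hB
  have hB0 : 0 ≤ B := integral_nonneg (fun x => sq_nonneg _)
  -- the approximating sequence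
  set f : ℕ → E3 → ℝ≥0∞ :=
    fun n x => ENNReal.ofReal (u x ^ 2 / (‖x‖ ^ 2 + 1 / (n + 1))) with hf
  have hεpos : ∀ n : ℕ, (0:ℝ) < 1 / (n + 1) := fun n => by positivity
  have hmeas : ∀ n, Measurable (f n) := by
    intro n
    apply Measurable.ennreal_ofReal
    exact ((hucont.pow 2).div ((continuous_norm.pow 2).add continuous_const)
      (fun x => (add_pos_of_nonneg_of_pos (sq_nonneg _) (hεpos n)).ne')).measurable
  have hmono : Monotone f := by
    intro n m hnm x
    apply ENNReal.ofReal_le_ofReal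
    apply div_le_div_of_nonneg_left (sq_nonneg _) (by positivity)
    have : (1:ℝ) / (m + 1) ≤ 1 / (n + 1) := by
      apply one_div_le_one_div_of_le (by positivity)
      push_cast
      have : (n:ℝ) ≤ m := by exact_mod_cast hnm
      linarith
    linarith [sq_nonneg ‖x‖]
  -- each approximant is bounded by 4B
  have hbound : ∀ n, ∫⁻ x, f n x ≤ ENNReal.ofReal (4 * B) := by
    intro n
    have hint : Integrable (fun x : E3 => u x ^ 2 / (‖x‖ ^ 2 + 1 / (n + 1))) := by
      apply Continuous.integrable_of_hasCompactSupport
      · exact (hucont.pow 2).div ((continuous_norm.pow 2).add continuous_const)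
          (fun x => by positivity)
      · apply HasCompactSupport.intro hsupp
        intro x hx
        rw [image_eq_zero_of_notMem_tsupport hx]
        simp
    have hnn : 0 ≤ᵐ[volume] fun x : E3 => u x ^ 2 / (‖x‖ ^ 2 + 1 / (n + 1)) :=
      Eventually.of_forall (fun x => by positivity)
    rw [hf]
    rw [← ofReal_integral_eq_lintegral_ofReal hint hnn]
    exact ENNReal.ofReal_le_ofReal (step_eps u hu hsupp (hεpos n))
  -- pointwise: target ≤ iSup
  have hpt : ∀ x : E3, ENNReal.ofReal (u x ^ 2 / ‖x‖ ^ 2) ≤ ⨆ n, f n x := by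
    intro x
    rcases eq_or_ne x 0 with rfl | hx
    · simp
    · have hx2 : (0:ℝ) < ‖x‖ ^ 2 := pow_pos (norm_pos_iff.mpr hx) 2
      have htend : Tendsto (fun n : ℕ => f n x) atTop
          (𝓝 (ENNReal.ofReal (u x ^ 2 / ‖x‖ ^ 2))) := by
        apply (ENNReal.continuous_ofReal.tendsto _).comp
        have h1 : Tendsto (fun n : ℕ => 1 / ((n:ℝ) + 1)) atTop (𝓝 0) :=
          tendsto_one_div_add_atTop_nhds_zero_nat
        have h2 : Tendsto (fun n : ℕ => ‖x‖ ^ 2 + 1 / ((n:ℝ) + 1)) atTop (𝓝 (‖x‖ ^ 2)) := by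
          simpa using (tendsto_const_nhds.add h1)
        exact (tendsto_const_nhds.div h2 hx2.ne')
      exact le_of_tendsto htend (Eventually.of_forall (fun n => le_iSup (fun m => f m x) n))
  -- assemble
  have hmeas_lhs : Measurable (fun x : E3 => u x ^ 2 / ‖x‖ ^ 2) :=
    ((hucont.pow 2).measurable).div ((continuous_norm.pow 2).measurable)
  have hlhs_nn : 0 ≤ᵐ[volume] fun x : E3 => u x ^ 2 / ‖x‖ ^ 2 :=
    Eventually.of_forall (fun x => by positivity)
  rw [integral_eq_lintegral_of_nonneg_ae hlhs_nn hmeas_lhs.aestronglyMeasurable]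
  have hle : ∫⁻ x, ENNReal.ofReal (u x ^ 2 / ‖x‖ ^ 2) ≤ ENNReal.ofReal (4 * B) := by
    calc ∫⁻ x, ENNReal.ofReal (u x ^ 2 / ‖x‖ ^ 2)
        ≤ ∫⁻ x, ⨆ n, f n x := lintegral_mono hpt
      _ = ⨆ n, ∫⁻ x, f n x := lintegral_iSup hmeas hmono
      _ ≤ ENNReal.ofReal (4 * B) := iSup_le hbound
  exact ENNReal.toReal_le_of_le_ofReal (by linarith) hle

end
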